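/- The number of permutations of {1,...,n} avoiding the pattern 123 equals the Catalan number C_n = (2n)! / (n! (n+1)!). -/

import Mathlib

/-!
Insert the new maximum `n + 1` into a permutation `π` of `{1, …, n}`. The result avoids 123
exactly when `π` does and every entry to the left of the insertion point belongs to the initial
decreasing run of `π`. Inserting in front lengthens that run by one, inserting at any other
admissible position `p` makes it exactly `p`. Thus the 123-avoiders of length `n` with initial
run `k` are counted by the Catalan triangle `ballot n k`, whose row sums satisfy the Catalan
recurrence.
-/

/-- A permutation of `{1,…,n}` avoids the pattern 123 if there are no
positions `i < j < k` with `π i < π j < π k`. -/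
def Avoids123 {n : ℕ} (π : Equiv.Perm (Fin n)) : Prop :=
  ¬ ∃ i j k : Fin n, i < j ∧ j < k ∧ π i < π j ∧ π j < π k

open Finset

/-- `ballot n k` counts the Dyck paths of semilength `n` that end with exactly `k` down-steps. -/
def ballot : ℕ → ℕ → ℕ
  | 0, 0 => 1
  | 0, _ + 1 => 0
  | _ + 1, 0 => 0
  | n + 1, k + 1 => ∑ r ∈ Ico k (n + 1), ballot n r

namespace ballot

@[simp] lemma zero_zero : ballot 0 0 = 1 := rfl

@[simp] lemma zero_succ (k : ℕ) : ballot 0 (k + 1) = 0 := rfl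

@[simp] lemma succ_zero (n : ℕ) : ballot (n + 1) 0 = 0 := rfl

lemma succ_succ (n k : ℕ) : ballot (n + 1) (k + 1) = ∑ r ∈ Ico k (n + 1), ballot n r := rfl

lemma eq_zero_of_lt {n k : ℕ} (h : n < k) : ballot n k = 0 := by
  obtain ⟨k, rfl⟩ := Nat.exists_eq_add_one_of_ne_zero (by omega : k ≠ 0)
  cases n with
  | zero => rfl
  | succ n => rw [succ_succ, Ico_eq_empty (by omega), sum_empty]

lemma sum_Ico_of_le {j m : ℕ} (k : ℕ) (h : j ≤ m) :
    ∑ r ∈ Ico k (m + 1), ballot j r = ballot (j + 1) (k + 1) := by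
  rw [succ_succ]
  refine (sum_subset (Ico_subset_Ico_right (by omega)) fun r hr hr' => ?_).symm
  simp only [mem_Ico] at hr hr'
  exact eq_zero_of_lt (by omega)

/-- First-return decomposition of Dyck paths. -/
lemma succ_succ_eq_sum_antidiagonal (n k : ℕ) :
    ballot (n + 1) (k + 1) = ∑ ij ∈ antidiagonal n, ballot (ij.1 + 1) 1 * ballot ij.2 k := by
  induction n generalizing k with
  | zero => cases k <;> simp [succ_succ]
  | succ m ih =>
    rw [Nat.sum_antidiagonal_succ']
    cases k with
    | zero => simp
    | succ k =>
      calc ballot (m + 2) (k + 2)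
          = ∑ s ∈ Ico k (m + 1), ballot (m + 1) (s + 1) := by
            rw [succ_succ, sum_Ico_add' (c := 1)]
        _ = ∑ ij ∈ antidiagonal m,
              ballot (ij.1 + 1) 1 * ∑ s ∈ Ico k (m + 1), ballot ij.2 s := by
            simp only [ih, mul_sum]
            exact sum_comm
        _ = _ := by
            rw [zero_succ, mul_zero, zero_add]
            refine sum_congr rfl fun ij hij => ?_
            rw [sum_Ico_of_le k (HasAntidiagonal.antidiagonal.snd_le hij)]

theorem succ_one_eq_catalan (n : ℕ) : ballot (n + 1) 1 = catalan n := by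
  induction n using Nat.strong_induction_on with
  | _ n ih =>
  cases n with
  | zero => simp [succ_succ]
  | succ n =>
    have hrow : ballot (n + 2) 1 =
        ∑ ij ∈ antidiagonal n, ballot (ij.1 + 1) 1 * ballot (ij.2 + 1) 1 := by
      rw [succ_succ, ← range_eq_Ico, sum_range_succ', succ_zero, add_zero,
        sum_congr rfl fun s _ => succ_succ_eq_sum_antidiagonal n s, sum_comm]
      refine sum_congr rfl fun ij hij => ?_
      rw [← mul_sum, range_eq_Ico, sum_Ico_of_le 0 (HasAntidiagonal.antidiagonal.snd_le hij)]
    rw [hrow, catalan_succ']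
    refine sum_congr rfl fun ij hij => ?_
    have hi := HasAntidiagonal.antidiagonal.fst_le hij
    have hj := HasAntidiagonal.antidiagonal.snd_le hij
    rw [ih _ (by omega), ih _ (by omega)]

end ballot

namespace Equiv.Perm

variable {n : ℕ}

instance : DecidablePred (@Avoids123 n) := fun π => by
  unfold Avoids123; infer_instance

def insertMax (p : Fin (n + 1)) (π : Perm (Fin n)) : Perm (Fin (n + 1)) :=
  (finSuccEquiv' p).trans (π.optionCongr.trans finSuccEquivLast.symm)

@[simp] lemma insertMax_self (p : Fin (n + 1)) (π : Perm (Fin n)) :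
    insertMax p π p = Fin.last n := by
  simp [insertMax, finSuccEquiv'_at, Equiv.optionCongr]

@[simp] lemma insertMax_succAbove (p : Fin (n + 1)) (π : Perm (Fin n)) (i : Fin n) :
    insertMax p π (p.succAbove i) = (π i).castSucc := by
  simp [insertMax, finSuccEquiv'_succAbove, Equiv.optionCongr]

lemma insertMax_injective :
    Function.Injective (fun x : Fin (n + 1) × Perm (Fin n) => insertMax x.1 x.2) := by
  rintro ⟨p, π⟩ ⟨q, ρ⟩ h
  simp only at h
  obtain rfl : p = q := (insertMax q ρ).injective <| by
    rw [insertMax_self, ← h, insertMax_self]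
  ext i : 2
  · rfl
  · simpa using congrArg (· (p.succAbove i)) h

lemma insertMax_bijective :
    Function.Bijective (fun x : Fin (n + 1) × Perm (Fin n) => insertMax x.1 x.2) := by
  rw [Fintype.bijective_iff_injective_and_card]
  exact ⟨insertMax_injective, by simp [Fintype.card_perm, Nat.factorial_succ]⟩

lemma avoids123_insertMax_iff (p : Fin (n + 1)) (π : Perm (Fin n)) :
    Avoids123 (insertMax p π) ↔ Avoids123 π ∧ StrictAntiOn π {i | (i : ℕ) < p} := by
  have hmono := Fin.strictMono_succAbove p
  constructor
  · intro h
    refine ⟨fun ⟨i, j, k, hij, hjk, h1, h2⟩ => h ⟨p.succAbove i, p.succAbove j,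
      p.succAbove k, hmono hij, hmono hjk, by simpa using h1, by simpa using h2⟩,
      fun i hi j hj hij => ?_⟩
    by_contra hji
    have hjp : j.castSucc < p := Fin.lt_def.mpr hj
    have hip : i.castSucc < p := lt_trans (Fin.castSucc_lt_castSucc_iff.mpr hij) hjp
    refine h ⟨p.succAbove i, p.succAbove j, p, hmono hij,
      (p.succAbove_lt_iff_castSucc_lt j).mpr hjp, ?_, ?_⟩
    · simpa using lt_of_le_of_ne (not_lt.mp hji) (π.injective.ne hij.ne)
    · simp
  · rintro ⟨hav, hdec⟩ ⟨a, b, c, hab, hbc, h1, h2⟩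
    obtain rfl | ⟨i, rfl⟩ := p.eq_self_or_eq_succAbove a
    · exact (Fin.le_last _).not_gt (insertMax_self a π ▸ h1.trans h2)
    obtain rfl | ⟨j, rfl⟩ := p.eq_self_or_eq_succAbove b
    · exact (Fin.le_last _).not_gt (insertMax_self b π ▸ h2)
    have hij := hmono.lt_iff_lt.mp hab
    simp only [insertMax_succAbove, Fin.castSucc_lt_castSucc_iff] at h1
    obtain rfl | ⟨k, rfl⟩ := p.eq_self_or_eq_succAbove c
    · have hjc : (j : ℕ) < c := Fin.lt_def.mp ((c.succAbove_lt_iff_castSucc_lt j).mp hbc)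
      exact (hdec (show (i : ℕ) < c by have := Fin.lt_def.mp hij; omega) hjc hij).asymm h1
    · simp only [insertMax_succAbove, Fin.castSucc_lt_castSucc_iff] at h2
      exact hav ⟨i, j, k, hij, hmono.lt_iff_lt.mp hbc, h1, h2⟩

open Classical in
noncomputable def initialRun (π : Perm (Fin n)) : ℕ :=
  Nat.findGreatest (fun k => StrictAntiOn π {i | (i : ℕ) < k}) n

lemma initialRun_le (π : Perm (Fin n)) : initialRun π ≤ n := Nat.findGreatest_le n

lemma le_initialRun_iff {π : Perm (Fin n)} {k : ℕ} (hk : k ≤ n) :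
    k ≤ initialRun π ↔ StrictAntiOn π {i | (i : ℕ) < k} := by
  unfold initialRun
  refine ⟨fun h => ?_, fun h => Nat.le_findGreatest hk h⟩
  have hrun := Nat.findGreatest_spec (P := fun k => StrictAntiOn π {i | (i : ℕ) < k})
    (Nat.zero_le n) (by simpa using Set.subsingleton_empty.strictAntiOn π)
  exact hrun.mono fun i (hi : (i : ℕ) < k) => lt_of_lt_of_le hi h

lemma initialRun_eq_of_forall_iff {π : Perm (Fin n)} {r : ℕ} (hr : r ≤ n)
    (h : ∀ k ≤ n, StrictAntiOn π {i | (i : ℕ) < k} ↔ k ≤ r) : initialRun π = r :=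
  le_antisymm ((h _ (initialRun_le π)).mp ((le_initialRun_iff (initialRun_le π)).mp le_rfl))
    ((le_initialRun_iff hr).mpr ((h r hr).mpr le_rfl))

lemma initialRun_pos (π : Perm (Fin (n + 1))) : 0 < initialRun π :=
  (le_initialRun_iff (by omega)).mpr <| Set.Subsingleton.strictAntiOn _
    fun i (hi : (i : ℕ) < 1) j (hj : (j : ℕ) < 1) => Fin.ext (by omega)

@[simp] lemma insertMax_zero_succ (π : Perm (Fin n)) (i : Fin n) :
    insertMax 0 π i.succ = (π i).castSucc := by
  rw [← Fin.succAbove_zero, insertMax_succAbove]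

lemma strictAntiOn_insertMax_zero_iff (π : Perm (Fin n)) (k : ℕ) :
    StrictAntiOn (insertMax 0 π) {x | (x : ℕ) < k + 1} ↔
      StrictAntiOn π {i | (i : ℕ) < k} := by
  constructor
  · intro h i (hi : (i : ℕ) < k) j (hj : (j : ℕ) < k) hij
    simpa using h (a := i.succ) (by simpa using hi) (b := j.succ) (by simpa using hj)
      (Fin.succ_lt_succ_iff.mpr hij)
  · intro h x hx y hy hxy
    cases y using Fin.cases with
    | zero => exact absurd hxy (Fin.not_lt_zero x)
    | succ j =>
      cases x using Fin.cases with
      | zero => simp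
      | succ i =>
        simp only [Set.mem_ofPred_eq, Fin.val_succ, add_lt_add_iff_right] at hx hy
        simpa using h hx hy (Fin.succ_lt_succ_iff.mp hxy)

lemma strictAntiOn_insertMax_iff {p : Fin (n + 1)} {π : Perm (Fin n)} (hp : 0 < (p : ℕ))
    (hπ : StrictAntiOn π {i | (i : ℕ) < p}) (k : ℕ) :
    StrictAntiOn (insertMax p π) {x | (x : ℕ) < k} ↔ k ≤ p := by
  constructor
  · intro h
    by_contra hkp
    have hq : (⟨p - 1, by omega⟩ : Fin (n + 1)) < p :=
      Fin.lt_def.mpr (by show (p : ℕ) - 1 < p; omega)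
    have := h (show (p - 1 : ℕ) < k by omega) (show (p : ℕ) < k by omega) hq
    exact (Fin.le_last _).not_gt (insertMax_self p π ▸ this)
  · intro hkp x (hx : (x : ℕ) < k) y (hy : (y : ℕ) < k) hxy
    have below (z : Fin (n + 1)) (hz : (z : ℕ) < k) :
        ∃ i : Fin n, (i : ℕ) < p ∧ p.succAbove i = z := by
      have hzp : z < p := Fin.lt_def.mpr (by omega)
      exact ⟨z.castPred (Fin.ne_last_of_lt hzp), Fin.lt_def.mp hzp,
        Fin.succAbove_castPred_of_lt p z hzp⟩
    obtain ⟨i, hi, rfl⟩ := below x hx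
    obtain ⟨j, hj, rfl⟩ := below y hy
    simpa using hπ hi hj ((Fin.strictMono_succAbove p).lt_iff_lt.mp hxy)

lemma initialRun_insertMax_zero (π : Perm (Fin n)) :
    initialRun (insertMax 0 π) = initialRun π + 1 := by
  refine initialRun_eq_of_forall_iff (by have := initialRun_le π; omega) fun k hk => ?_
  cases k with
  | zero => simpa using Set.subsingleton_empty.strictAntiOn _
  | succ k =>
    rw [strictAntiOn_insertMax_zero_iff, ← le_initialRun_iff (by omega)]
    omega

lemma initialRun_insertMax {p : Fin (n + 1)} {π : Perm (Fin n)} (hp : 0 < (p : ℕ))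
    (h : (p : ℕ) ≤ initialRun π) : initialRun (insertMax p π) = p :=
  initialRun_eq_of_forall_iff p.is_lt.le fun k _ =>
    strictAntiOn_insertMax_iff hp ((le_initialRun_iff (by omega)).mp h) k

lemma avoids123_insertMax_and_initialRun_iff (p : Fin (n + 1)) (π : Perm (Fin n)) (k : ℕ) :
    Avoids123 (insertMax p π) ∧ initialRun (insertMax p π) = k + 1 ↔
      Avoids123 π ∧ ((p : ℕ) = 0 ∧ initialRun π = k ∨
        (p : ℕ) = k + 1 ∧ k + 1 ≤ initialRun π) := by
  rw [avoids123_insertMax_iff, ← le_initialRun_iff p.is_le]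
  rcases Nat.eq_zero_or_pos p with hp | hp
  · obtain rfl : p = 0 := Fin.ext hp
    rw [initialRun_insertMax_zero]
    simp
  · constructor
    · rintro ⟨⟨hav, hpπ⟩, hrun⟩
      rw [initialRun_insertMax hp hpπ] at hrun
      exact ⟨hav, Or.inr ⟨hrun, hrun ▸ hpπ⟩⟩
    · rintro ⟨hav, ⟨hp0, -⟩ | ⟨hpk, hkπ⟩⟩
      · omega
      · exact ⟨⟨hav, hpk ▸ hkπ⟩, hpk ▸ initialRun_insertMax hp (hpk ▸ hkπ)⟩

lemma card_initialRun_succ (n k : ℕ) :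
    #{σ : Perm (Fin (n + 1)) | Avoids123 σ ∧ initialRun σ = k + 1} =
      #{π : Perm (Fin n) | Avoids123 π ∧ k ≤ initialRun π} := by
  calc _ = #{x : Fin (n + 1) × Perm (Fin n) | Avoids123 x.2 ∧
          ((x.1 : ℕ) = 0 ∧ initialRun x.2 = k ∨
            (x.1 : ℕ) = k + 1 ∧ k + 1 ≤ initialRun x.2)} :=
        (card_equiv (Equiv.ofBijective _ insertMax_bijective) fun x => by
          simp [avoids123_insertMax_and_initialRun_iff]).symm
    _ = _ := by
      refine card_nbij Prod.snd (fun x hx => ?_) (fun x hx y hy hxy => ?_) (fun π hπ => ?_)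
      · simp only [coe_filter_univ, Set.mem_ofPred_eq] at hx ⊢
        exact ⟨hx.1, by omega⟩
      · simp only [coe_filter_univ, Set.mem_ofPred_eq] at hx hy
        refine Prod.ext (Fin.ext ?_) hxy
        rw [hxy] at hx
        omega
      · simp only [coe_filter_univ, Set.mem_ofPred_eq] at hπ
        obtain ⟨hav, hk⟩ := hπ
        rcases hk.eq_or_lt with rfl | hlt
        · exact ⟨(0, π), by simp [hav], rfl⟩
        · have := initialRun_le π
          exact ⟨(⟨k + 1, by omega⟩, π), by simp [hav]; omega, rfl⟩

lemma card_initialRun (n k : ℕ) :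
    #{π : Perm (Fin n) | Avoids123 π ∧ initialRun π = k} = ballot n k := by
  induction n generalizing k with
  | zero =>
    have hrun (π : Perm (Fin 0)) : initialRun π = 0 := Nat.le_zero.mp (initialRun_le π)
    cases k with
    | zero =>
      rw [filter_true_of_mem fun π _ => ⟨fun ⟨i, _⟩ => i.elim0, hrun π⟩]
      rfl
    | succ k => simp [hrun]
  | succ n ih =>
    cases k with
    | zero => simp [(initialRun_pos _).ne']
    | succ k =>
      rw [card_initialRun_succ, ballot.succ_succ,
        card_eq_sum_card_fiberwise (f := initialRun) (t := Ico k (n + 1)) fun π hπ => ?_]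
      · refine sum_congr rfl fun r hr => ?_
        rw [filter_filter, ← ih r]
        refine congrArg card (filter_congr fun π _ => ?_)
        rw [mem_Ico] at hr
        constructor
        · rintro ⟨⟨hav, -⟩, rfl⟩
          exact ⟨hav, rfl⟩
        · rintro ⟨hav, rfl⟩
          exact ⟨⟨hav, hr.1⟩, rfl⟩
      · have := initialRun_le π
        simp only [coe_filter_univ, Set.mem_ofPred_eq, coe_Ico, Set.mem_Ico] at hπ ⊢
        omega

theorem card_avoids123 (n : ℕ) : #{π : Perm (Fin n) | Avoids123 π} = catalan n := by
  rw [← ballot.succ_one_eq_catalan, ← card_initialRun, card_initialRun_succ]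
  simp

end Equiv.Perm

theorem catalan_eq_factorial_div (n : ℕ) :
    catalan n = (2 * n).factorial / (n.factorial * (n + 1).factorial) := by
  rw [catalan_eq_centralBinom_div, Nat.centralBinom,
    Nat.choose_eq_factorial_div_factorial (by omega : n ≤ 2 * n),
    show 2 * n - n = n by omega, Nat.div_div_eq_div_mul, Nat.factorial_succ]
  ring_nf

theorem count_avoiding_123_eq_catalan (n : ℕ) :
    Nat.card {π : Equiv.Perm (Fin n) // Avoids123 π} = catalan n ∧
    catalan n = (2 * n).factorial / (n.factorial * (n + 1).factorial) := by
  refine ⟨?_, catalan_eq_factorial_div n⟩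
  rw [Nat.card_eq_fintype_card, Fintype.card_subtype, Equiv.Perm.card_avoids123]
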